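/- arXiv:2210.00381 — 4 statements merged into one kernel-verified Lean document; each statement's English description precedes it below -/
import Mathlib

section
/- Under the Frenet–Serret equations, the complexified frame vector M = (N + iB)e^{iθ} satisfies ∂M/∂s = −ψ T, where T is regarded as a ℂ³-valued map and ψ = k e^{iθ} is the Hasimoto wave function. -/
open scoped BigOperators RealInnerProductSpace
open Complex

noncomputable section

abbrev E3 : Type := EuclideanSpace ℝ (Fin 3)

/-- Partial derivative with respect to the first (arclength) variable. -/
noncomputable def dS {V : Type} [NormedAddCommGroup V] [NormedSpace ℝ V]
    (F : ℝ → ℝ → V) : ℝ → ℝ → V := fun s t => deriv (fun x => F x t) s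

/-- Partial derivative with respect to the second (time) variable. -/
noncomputable def dT {V : Type} [NormedAddCommGroup V] [NormedSpace ℝ V]
    (F : ℝ → ℝ → V) : ℝ → ℝ → V := fun s t => deriv (fun x => F s x) t

/-- Complexification of a real vector in `ℝ³`. -/
noncomputable def cvec (v : E3) : Fin 3 → ℂ := fun i => (v i : ℂ)

/-- Bilinear extension of the real inner product to `ℂ³`. -/
noncomputable def cip (u v : Fin 3 → ℂ) : ℂ := ∑ i, u i * v i

/-- The phase `θ(s,t) = ∫₀^s τ(s',t) ds'`. -/
noncomputable def θf (τ : ℝ → ℝ → ℝ) : ℝ → ℝ → ℝ :=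
  fun s t => ∫ x in (0:ℝ)..s, τ x t

/-- The Hasimoto wave function `ψ = k e^{iθ}`. -/
noncomputable def ψf (k τ : ℝ → ℝ → ℝ) : ℝ → ℝ → ℂ :=
  fun s t => (k s t : ℂ) * Complex.exp (Complex.I * (θf τ s t : ℂ))

/-- The complexified frame vector `M = (N + iB) e^{iθ}`. -/
noncomputable def Mf (N B : ℝ → ℝ → E3) (τ : ℝ → ℝ → ℝ) : ℝ → ℝ → (Fin 3 → ℂ) :=
  fun s t => Complex.exp (Complex.I * (θf τ s t : ℂ)) •
    (cvec (N s t) + Complex.I • cvec (B s t))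

/-- `ω = ⟨∂M/∂t, T⟩` (bilinear inner product). -/
noncomputable def ωf (T N B : ℝ → ℝ → E3) (τ : ℝ → ℝ → ℝ) : ℝ → ℝ → ℂ :=
  fun s t => cip (dT (Mf N B τ) s t) (cvec (T s t))

theorem stmt0
    (γ T N B : ℝ → ℝ → E3) (k τ : ℝ → ℝ → ℝ)
    (hγsm : ContDiff ℝ (⊤ : ℕ∞) (Function.uncurry γ))
    (hTsm : ContDiff ℝ (⊤ : ℕ∞) (Function.uncurry T))
    (hNsm : ContDiff ℝ (⊤ : ℕ∞) (Function.uncurry N))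
    (hBsm : ContDiff ℝ (⊤ : ℕ∞) (Function.uncurry B))
    (hksm : ContDiff ℝ (⊤ : ℕ∞) (Function.uncurry k))
    (hτsm : ContDiff ℝ (⊤ : ℕ∞) (Function.uncurry τ))
    (hkpos : ∀ s t, 0 < k s t)
    (hTdef : ∀ s t, dS γ s t = T s t)
    (horth : ∀ s t, ⟪T s t, T s t⟫ = 1 ∧ ⟪N s t, N s t⟫ = 1 ∧
      ⟪B s t, B s t⟫ = 1 ∧ ⟪T s t, N s t⟫ = 0 ∧
      ⟪T s t, B s t⟫ = 0 ∧ ⟪N s t, B s t⟫ = 0)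
    (hFS1 : ∀ s t, dS T s t = k s t • N s t)
    (hFS2 : ∀ s t, dS N s t = -(k s t) • T s t + τ s t • B s t)
    (hFS3 : ∀ s t, dS B s t = -(τ s t) • N s t)
    :
    ∀ s t, dS (Mf N B τ) s t = -(ψf k τ s t) • cvec (T s t) := by

  intro s t
  -- the complexification as a continuous linear map
  set A : E3 →L[ℝ] (Fin 3 → ℂ) :=
    ContinuousLinearMap.pi (fun i => Complex.ofRealCLM.comp (EuclideanSpace.proj i)) with hA
  have hAcvec : ∀ v : E3, A v = cvec v := fun v => rfl
  -- derivative of θ in s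
  have hτc : Continuous fun x => τ x t := by
    have := hτsm.continuous.comp (continuous_id.prodMk continuous_const : Continuous fun x : ℝ => (x, t))
    exact this
  have hθ : HasDerivAt (fun x => θf τ x t) (τ s t) s := by
    have := (hτc.integral_hasStrictDerivAt 0 s).hasDerivAt
    exact this
  -- derivatives of N and B in s
  have hdiff : ∀ F : ℝ → ℝ → E3, ContDiff ℝ (⊤ : ℕ∞) (Function.uncurry F) →
      HasDerivAt (fun x => F x t) (dS F s t) s := by
    intro F hF
    have h1 : DifferentiableAt ℝ (fun x => F x t) s := by
      have := (hF.differentiable (by simp) (s, t)).comp s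
        ((differentiableAt_id.prodMk (differentiableAt_const t)) : DifferentiableAt ℝ (fun x : ℝ => (x, t)) s)
      exact this
    exact h1.hasDerivAt
  have hN := hdiff N hNsm
  have hB := hdiff B hBsm
  have hcN : HasDerivAt (fun x => cvec (N x t)) (cvec (dS N s t)) s := by
    have := A.hasFDerivAt.comp_hasDerivAt s hN
    exact this
  have hcB : HasDerivAt (fun x => cvec (B x t)) (cvec (dS B s t)) s := by
    have := A.hasFDerivAt.comp_hasDerivAt s hB
    exact this
  -- derivative of the exponential factor
  have he : HasDerivAt (fun x => Complex.exp (Complex.I * (θf τ x t : ℂ)))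
      (Complex.exp (Complex.I * (θf τ s t : ℂ)) * (Complex.I * (τ s t : ℂ))) s := by
    exact ((hθ.ofReal_comp).const_mul Complex.I).cexp
  -- derivative of M
  have hvec : HasDerivAt (fun x => cvec (N x t) + Complex.I • cvec (B x t))
      (cvec (dS N s t) + Complex.I • cvec (dS B s t)) s := hcN.add (hcB.const_smul Complex.I)
  have hM : HasDerivAt (fun x => Mf N B τ x t)
      (Complex.exp (Complex.I * (θf τ s t : ℂ)) • (cvec (dS N s t) + Complex.I • cvec (dS B s t))
        + (Complex.exp (Complex.I * (θf τ s t : ℂ)) * (Complex.I * (τ s t : ℂ))) •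
            (cvec (N s t) + Complex.I • cvec (B s t))) s := by
    have := he.smul hvec
    exact this
  have hDS : dS (Mf N B τ) s t = _ := hM.deriv
  rw [hDS, hFS2 s t, hFS3 s t]
  funext i
  simp only [ψf, cvec, Mf, Pi.add_apply, Pi.smul_apply, smul_eq_mul, Pi.neg_apply,
    PiLp.add_apply, PiLp.smul_apply, PiLp.neg_apply, Complex.ofReal_add, Complex.ofReal_mul,
    Complex.ofReal_neg, neg_mul, neg_smul, Complex.real_smul]
  have hI : Complex.I * Complex.I = -1 := Complex.I_mul_I
  ring_nf
  rw [Complex.I_sq]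
  ring
end
end

section
/- Define ω(s,t) = ⟨∂M/∂t, T⟩, the projection of ∂M/∂t onto the tangent vector using the bilinear extension of the real inner product. Then ω = −(∂μ/∂s + iτμ + i∂α/∂s − τα + νk) e^{iθ}. -/
open scoped BigOperators RealInnerProductSpace
open Complex

noncomputable section

/- ### Auxiliary lemmas -/

lemma aux_hdS {V : Type} [NormedAddCommGroup V] [NormedSpace ℝ V] {F : ℝ → ℝ → V}
    (h : ContDiff ℝ (⊤ : ℕ∞) (Function.uncurry F)) (s t : ℝ) :
    HasDerivAt (fun x => F x t) (dS F s t) s := by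
  have : DifferentiableAt ℝ (fun x => F x t) s :=
    ((h.differentiable (by simp)).comp
      ((differentiable_id.prodMk (differentiable_const t)) :
        Differentiable ℝ (fun x : ℝ => (x, t)))).differentiableAt
  exact this.hasDerivAt

lemma aux_hdT {V : Type} [NormedAddCommGroup V] [NormedSpace ℝ V] {F : ℝ → ℝ → V}
    (h : ContDiff ℝ (⊤ : ℕ∞) (Function.uncurry F)) (s t : ℝ) :
    HasDerivAt (fun x => F s x) (dT F s t) t := by
  have : DifferentiableAt ℝ (fun x => F s x) t :=
    ((h.differentiable (by simp)).comp
      (((differentiable_const s).prodMk differentiable_id) :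
        Differentiable ℝ (fun x : ℝ => (s, x)))).differentiableAt
  exact this.hasDerivAt

lemma aux_hθt (τ : ℝ → ℝ → ℝ) (hτ : ContDiff ℝ (⊤ : ℕ∞) (Function.uncurry τ)) (s t₀ : ℝ) :
    HasDerivAt (fun x => θf τ s x)
      (∫ u in (0:ℝ)..s, fderiv ℝ (Function.uncurry τ) (u, t₀) (0, 1)) t₀ := by
  set D : ℝ × ℝ → ℝ := fun q => fderiv ℝ (Function.uncurry τ) q (0, 1) with hD
  have hDcont : Continuous D := (hτ.continuous_fderiv (by simp)).clm_apply continuous_const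
  obtain ⟨C, hC⟩ := (IsCompact.prod isCompact_uIcc (isCompact_closedBall t₀ 1)
    : IsCompact ((Set.uIcc (0:ℝ) s) ×ˢ Metric.closedBall t₀ 1)).exists_bound_of_continuousOn
    hDcont.continuousOn
  have key := intervalIntegral.hasDerivAt_integral_of_dominated_loc_of_deriv_le
    (𝕜 := ℝ) (F := fun x u => τ u x) (F' := fun x u => D (u, x)) (x₀ := t₀) (a := 0) (b := s)
    (bound := fun _ => C) (μ := MeasureTheory.volume) (Metric.ball_mem_nhds t₀ one_pos)
    (Filter.Eventually.of_forall fun x =>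
      ((hτ.continuous.comp (continuous_id.prodMk continuous_const)).aestronglyMeasurable))
    ((hτ.continuous.comp (continuous_id.prodMk continuous_const)).intervalIntegrable 0 s)
    ((hDcont.comp (continuous_id.prodMk continuous_const)).aestronglyMeasurable)
    (Filter.Eventually.of_forall fun u hu => fun x hx =>
      hC (u, x) ⟨Set.uIoc_subset_uIcc hu, Metric.ball_subset_closedBall hx⟩)
    (intervalIntegrable_const)
    (Filter.Eventually.of_forall fun u _ => fun x _ =>
      ((hτ.differentiable (by simp) (u, x)).hasFDerivAt.comp_hasDerivAt x
        ((hasDerivAt_const x u).prodMk (hasDerivAt_id x))))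
  exact key.2

lemma aux_cast_sum_mul (u v : E3) :
    (∑ i, ((u i : ℝ) : ℂ) * ((v i : ℝ) : ℂ)) = ((⟪u, v⟫ : ℝ) : ℂ) := by
  rw [PiLp.inner_apply]
  push_cast
  norm_num [RCLike.inner_apply, conj_trivial]
  exact Finset.sum_congr rfl (fun i _ => mul_comm _ _)

theorem stmt3
    (γ T N B : ℝ → ℝ → E3) (k τ : ℝ → ℝ → ℝ)
    (hγsm : ContDiff ℝ (⊤ : ℕ∞) (Function.uncurry γ))
    (hTsm : ContDiff ℝ (⊤ : ℕ∞) (Function.uncurry T))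
    (hNsm : ContDiff ℝ (⊤ : ℕ∞) (Function.uncurry N))
    (hBsm : ContDiff ℝ (⊤ : ℕ∞) (Function.uncurry B))
    (hksm : ContDiff ℝ (⊤ : ℕ∞) (Function.uncurry k))
    (hτsm : ContDiff ℝ (⊤ : ℕ∞) (Function.uncurry τ))
    (hkpos : ∀ s t, 0 < k s t)
    (hTdef : ∀ s t, dS γ s t = T s t)
    (horth : ∀ s t, ⟪T s t, T s t⟫ = 1 ∧ ⟪N s t, N s t⟫ = 1 ∧
      ⟪B s t, B s t⟫ = 1 ∧ ⟪T s t, N s t⟫ = 0 ∧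
      ⟪T s t, B s t⟫ = 0 ∧ ⟪N s t, B s t⟫ = 0)
    (hFS1 : ∀ s t, dS T s t = k s t • N s t)
    (hFS2 : ∀ s t, dS N s t = -(k s t) • T s t + τ s t • B s t)
    (hFS3 : ∀ s t, dS B s t = -(τ s t) • N s t)
    (ν μ α : ℝ → ℝ → ℝ)
    (hνsm : ContDiff ℝ (⊤ : ℕ∞) (Function.uncurry ν))
    (hμsm : ContDiff ℝ (⊤ : ℕ∞) (Function.uncurry μ))
    (hαsm : ContDiff ℝ (⊤ : ℕ∞) (Function.uncurry α))
    (hkin : ∀ s t, dT γ s t = ν s t • T s t + μ s t • N s t + α s t • B s t)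
    (hmixγ : ∀ s t, dS (dT γ) s t = dT (dS γ) s t)
    (hmixT : ∀ s t, dS (dT T) s t = dT (dS T) s t)
    (hmixN : ∀ s t, dS (dT N) s t = dT (dS N) s t)
    (hmixB : ∀ s t, dS (dT B) s t = dT (dS B) s t)
    :
    ∀ s t, ωf T N B τ s t =
      -(((dS μ s t : ℝ) : ℂ) + Complex.I * (τ s t : ℂ) * (μ s t : ℂ) +
          Complex.I * ((dS α s t : ℝ) : ℂ) - (τ s t : ℂ) * (α s t : ℂ) +
          (ν s t : ℂ) * (k s t : ℂ)) *
        Complex.exp (Complex.I * (θf τ s t : ℂ)) := by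
  intro s t
  obtain ⟨hTT, hNN, hBB, hTN, hTB, hNB⟩ := horth s t
  -- Step 1 : the time derivative of T
  have hTdot : dT T s t =
      (dS ν s t - μ s t * k s t) • T s t +
      (ν s t * k s t + dS μ s t - α s t * τ s t) • N s t +
      (μ s t * τ s t + dS α s t) • B s t := by
    have e1 : dT T s t = dT (dS γ) s t := by
      simp only [dT]
      congr 1
      funext x
      exact (hTdef s x).symm
    have hTx := aux_hdS hTsm s t
    rw [hFS1 s t] at hTx
    have hNx := aux_hdS hNsm s t
    rw [hFS2 s t] at hNx
    have hBx := aux_hdS hBsm s t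
    rw [hFS3 s t] at hBx
    have hsum : HasDerivAt (fun x => ν x t • T x t + μ x t • N x t + α x t • B x t)
        ((ν s t • (k s t • N s t) + dS ν s t • T s t) +
         (μ s t • (-(k s t) • T s t + τ s t • B s t) + dS μ s t • N s t) +
         (α s t • (-(τ s t) • N s t) + dS α s t • B s t)) s :=
      (((aux_hdS hνsm s t).smul hTx).add ((aux_hdS hμsm s t).smul hNx)).add
        ((aux_hdS hαsm s t).smul hBx)
    have e2 : dS (dT γ) s t =
        (ν s t • (k s t • N s t) + dS ν s t • T s t) +
        (μ s t • (-(k s t) • T s t + τ s t • B s t) + dS μ s t • N s t) +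
        (α s t • (-(τ s t) • N s t) + dS α s t • B s t) := by
      have efun : (fun x => dT γ x t) = fun x => ν x t • T x t + μ x t • N x t + α x t • B x t := by
        funext x; exact hkin x t
      show deriv (fun x => dT γ x t) s = _
      rw [efun]
      exact hsum.deriv
    rw [e1, ← hmixγ s t, e2]
    module
  -- Step 2 : inner products with the time derivatives of N and B
  have hip : ∀ (P : ℝ → ℝ → E3), ContDiff ℝ (⊤ : ℕ∞) (Function.uncurry P) →
      (∀ x, ⟪P s x, T s x⟫ = 0) → ⟪dT P s t, T s t⟫ = -⟪P s t, dT T s t⟫ := by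
    intro P hPsm hzero
    have hd : HasDerivAt (fun x => ⟪P s x, T s x⟫) (⟪P s t, dT T s t⟫ + ⟪dT P s t, T s t⟫) t :=
      (aux_hdT hPsm s t).inner ℝ (aux_hdT hTsm s t)
    have hfun : (fun x => ⟪P s x, T s x⟫) = fun _ => (0 : ℝ) := funext fun x => hzero x
    rw [hfun] at hd
    have := (hasDerivAt_const t (0:ℝ)).unique hd
    linarith
  have hNT0 : ⟪N s t, T s t⟫ = 0 := by rw [real_inner_comm]; exact hTN
  have hBT0 : ⟪B s t, T s t⟫ = 0 := by rw [real_inner_comm]; exact hTB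
  have hBN0 : ⟪B s t, N s t⟫ = 0 := by rw [real_inner_comm]; exact hNB
  have hNTd : ⟪dT N s t, T s t⟫ = -(ν s t * k s t + dS μ s t - α s t * τ s t) := by
    have h0 := hip N hNsm (fun x => by rw [real_inner_comm]; exact (horth s x).2.2.2.1)
    rw [h0, hTdot]
    simp only [inner_add_right, real_inner_smul_right, hNT0, hNN, hNB]
    ring
  have hBTd : ⟪dT B s t, T s t⟫ = -(μ s t * τ s t + dS α s t) := by
    have h0 := hip B hBsm (fun x => by rw [real_inner_comm]; exact (horth s x).2.2.2.2.1)
    rw [h0, hTdot]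
    simp only [inner_add_right, real_inner_smul_right, hBT0, hBN0, hBB]
    ring
  -- Step 3 : the time derivative of M
  set c : ℝ := ∫ u in (0:ℝ)..s, fderiv ℝ (Function.uncurry τ) (u, t) (0, 1) with hc
  have hθ : HasDerivAt (fun x => θf τ s x) c t := aux_hθt τ hτsm s t
  have hexp : HasDerivAt (fun x => Complex.exp (Complex.I * (θf τ s x : ℂ)))
      (Complex.exp (Complex.I * (θf τ s t : ℂ)) * (Complex.I * (c : ℂ))) t :=
    (hθ.ofReal_comp.const_mul Complex.I).cexp
  have hNi : ∀ i : Fin 3, HasDerivAt (fun x => ((N s x i : ℝ) : ℂ)) ((dT N s t i : ℝ) : ℂ) t := by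
    intro i
    have h := (EuclideanSpace.proj (𝕜 := ℝ) i).hasFDerivAt.comp_hasDerivAt t (aux_hdT hNsm s t)
    have h2 : HasDerivAt (fun x => N s x i) (dT N s t i) t := by
      exact h
    exact h2.ofReal_comp
  have hBi : ∀ i : Fin 3, HasDerivAt (fun x => ((B s x i : ℝ) : ℂ)) ((dT B s t i : ℝ) : ℂ) t := by
    intro i
    have h := (EuclideanSpace.proj (𝕜 := ℝ) i).hasFDerivAt.comp_hasDerivAt t (aux_hdT hBsm s t)
    have h2 : HasDerivAt (fun x => B s x i) (dT B s t i) t := by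
      exact h
    exact h2.ofReal_comp
  set e : ℂ := Complex.exp (Complex.I * (θf τ s t : ℂ)) with he
  set V : Fin 3 → ℂ := fun i =>
    e * (Complex.I * (c : ℂ)) * (((N s t i : ℝ) : ℂ) + Complex.I * ((B s t i : ℝ) : ℂ)) +
    e * (((dT N s t i : ℝ) : ℂ) + Complex.I * ((dT B s t i : ℝ) : ℂ)) with hV
  have hM : HasDerivAt (fun x => Mf N B τ s x) V t := by
    rw [hasDerivAt_pi]
    intro i
    have h := hexp.mul ((hNi i).add ((hBi i).const_mul Complex.I))
    have efun : (fun x => Mf N B τ s x i) =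
        fun x => Complex.exp (Complex.I * (θf τ s x : ℂ)) *
          (((N s x i : ℝ) : ℂ) + Complex.I * ((B s x i : ℝ) : ℂ)) := by
      funext x
      simp [Mf, cvec, Pi.smul_apply, smul_eq_mul]
    rw [hV]
    rw [efun]
    exact h
  have hdTM : dT (Mf N B τ) s t = V := hM.deriv
  -- Step 4 : assemble
  have hsplit : ∀ i : Fin 3, V i * ((T s t i : ℝ) : ℂ) =
      (e * (Complex.I * (c : ℂ))) * (((N s t i : ℝ) : ℂ) * ((T s t i : ℝ) : ℂ)) +
      (e * (Complex.I * (c : ℂ)) * Complex.I) * (((B s t i : ℝ) : ℂ) * ((T s t i : ℝ) : ℂ)) +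
      e * (((dT N s t i : ℝ) : ℂ) * ((T s t i : ℝ) : ℂ)) +
      (e * Complex.I) * (((dT B s t i : ℝ) : ℂ) * ((T s t i : ℝ) : ℂ)) := by
    intro i; rw [hV]; ring
  have : ωf T N B τ s t =
      (e * (Complex.I * (c : ℂ))) * ((⟪N s t, T s t⟫ : ℝ) : ℂ) +
      (e * (Complex.I * (c : ℂ)) * Complex.I) * ((⟪B s t, T s t⟫ : ℝ) : ℂ) +
      e * ((⟪dT N s t, T s t⟫ : ℝ) : ℂ) +
      (e * Complex.I) * ((⟪dT B s t, T s t⟫ : ℝ) : ℂ) := by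
    show cip (dT (Mf N B τ) s t) (cvec (T s t)) = _
    rw [hdTM]
    simp only [cip, cvec]
    rw [Finset.sum_congr rfl (fun i _ => hsplit i)]
    simp only [Finset.sum_add_distrib, ← Finset.mul_sum, aux_cast_sum_mul]
  rw [this, hNTd, hBTd, hNT0, hBT0]
  push_cast
  ring
end
end

section
/- With ω = ⟨∂M/∂t, T⟩, the time derivative of the tangent vector can be expressed in the basis {M, M̄, T} as ∂T/∂t = −(1/2)(ω M̄ + ω̄ M) + (∂ν/∂s − μk) T, where T is regarded as a ℂ³-valued map. -/
open scoped BigOperators RealInnerProductSpace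
open Complex

noncomputable section

/-! ### Auxiliary lemmas -/

section Aux
variable {V : Type} [NormedAddCommGroup V] [NormedSpace ℝ V]

lemma hasDerivAt_dS {F : ℝ → ℝ → V} (hF : ContDiff ℝ (⊤ : ℕ∞) (Function.uncurry F)) (s t : ℝ) :
    HasDerivAt (fun x => F x t) (dS F s t) s := by
  have h : DifferentiableAt ℝ (fun x => F x t) s := by
    have h1 : DifferentiableAt ℝ (Function.uncurry F) (s, t) :=
      (hF.differentiable (by simp)).differentiableAt
    exact h1.comp s ((differentiableAt_id (𝕜 := ℝ) (x := s)).prodMk (differentiableAt_const t))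
  exact h.hasDerivAt

lemma hasDerivAt_dT {F : ℝ → ℝ → V} (hF : ContDiff ℝ (⊤ : ℕ∞) (Function.uncurry F)) (s t : ℝ) :
    HasDerivAt (fun x => F s x) (dT F s t) t := by
  have h : DifferentiableAt ℝ (fun x => F s x) t := by
    have h1 : DifferentiableAt ℝ (Function.uncurry F) (s, t) :=
      (hF.differentiable (by simp)).differentiableAt
    exact h1.comp t ((differentiableAt_const s).prodMk differentiableAt_id)
  exact h.hasDerivAt

end Aux

lemma theta_diffAt {τ : ℝ → ℝ → ℝ} (hτ : ContDiff ℝ (⊤ : ℕ∞) (Function.uncurry τ)) (s t : ℝ) :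
    DifferentiableAt ℝ (fun x => θf τ s x) t := by
  have hτc : Continuous (Function.uncurry τ) := hτ.continuous
  set D : ℝ × ℝ → ℝ := fun p => fderiv ℝ (Function.uncurry τ) p (0, 1) with hDdef
  have hDcont : Continuous D :=
    (hτ.continuous_fderiv (by simp)).clm_apply continuous_const
  have hK : IsCompact ((Set.uIcc 0 s) ×ˢ (Metric.closedBall t 1)) :=
    isCompact_uIcc.prod (isCompact_closedBall t 1)
  obtain ⟨C, hC⟩ := hK.exists_bound_of_continuousOn hDcont.continuousOn
  have key := intervalIntegral.hasDerivAt_integral_of_dominated_loc_of_deriv_le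
    (F := fun x y => τ y x) (F' := fun x y => D (y, x)) (x₀ := t)
    (s := Metric.ball t 1) (a := 0) (b := s) (μ := MeasureTheory.volume) (bound := fun _ => C)
    (Metric.ball_mem_nhds t one_pos)
    (Filter.Eventually.of_forall fun x =>
      ((hτc.comp (continuous_id.prodMk continuous_const)).aestronglyMeasurable))
    ((hτc.comp (continuous_id.prodMk continuous_const)).intervalIntegrable 0 s)
    ((hDcont.comp (continuous_id.prodMk continuous_const)).aestronglyMeasurable)
    (Filter.Eventually.of_forall fun y hy x hx => by
      have hmem : (y, x) ∈ (Set.uIcc 0 s) ×ˢ (Metric.closedBall t 1) :=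
        ⟨Set.uIoc_subset_uIcc hy, Metric.ball_subset_closedBall hx⟩
      simpa using hC _ hmem)
    intervalIntegrable_const
    (Filter.Eventually.of_forall fun y hy x hx => by
      have h1 : HasFDerivAt (Function.uncurry τ) (fderiv ℝ (Function.uncurry τ) (y, x)) (y, x) :=
        (hτ.differentiable (by simp) _).hasFDerivAt
      have h2 : HasDerivAt (fun u : ℝ => ((y, u) : ℝ × ℝ)) ((0 : ℝ), (1 : ℝ)) x :=
        (hasDerivAt_const _ _).prodMk (hasDerivAt_id _)
      exact h1.comp_hasDerivAt x h2)
  exact key.2.differentiableAt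

/-- `cvec` as a continuous linear map. -/
def cvecL : E3 →L[ℝ] (Fin 3 → ℂ) :=
  ContinuousLinearMap.pi fun i => Complex.ofRealCLM.comp (EuclideanSpace.proj i)

lemma cvecL_eq (v : E3) : cvecL v = cvec v := rfl

lemma cip_add_left (u v w : Fin 3 → ℂ) : cip (u + v) w = cip u w + cip v w := by
  simp [cip, add_mul, Finset.sum_add_distrib]

lemma cip_smul_left (c : ℂ) (u v : Fin 3 → ℂ) : cip (c • u) v = c * cip u v := by
  simp [cip, Finset.mul_sum, mul_assoc]

lemma cip_cvec (u v : E3) : cip (cvec u) (cvec v) = ((⟪u, v⟫ : ℝ) : ℂ) := by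
  simp only [cip, cvec, PiLp.inner_apply, RCLike.inner_apply, conj_trivial]
  push_cast
  exact Finset.sum_congr rfl fun i _ => mul_comm _ _

theorem stmt4
    (γ T N B : ℝ → ℝ → E3) (k τ : ℝ → ℝ → ℝ)
    (hγsm : ContDiff ℝ (⊤ : ℕ∞) (Function.uncurry γ))
    (hTsm : ContDiff ℝ (⊤ : ℕ∞) (Function.uncurry T))
    (hNsm : ContDiff ℝ (⊤ : ℕ∞) (Function.uncurry N))
    (hBsm : ContDiff ℝ (⊤ : ℕ∞) (Function.uncurry B))
    (hksm : ContDiff ℝ (⊤ : ℕ∞) (Function.uncurry k))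
    (hτsm : ContDiff ℝ (⊤ : ℕ∞) (Function.uncurry τ))
    (hkpos : ∀ s t, 0 < k s t)
    (hTdef : ∀ s t, dS γ s t = T s t)
    (horth : ∀ s t, ⟪T s t, T s t⟫ = 1 ∧ ⟪N s t, N s t⟫ = 1 ∧
      ⟪B s t, B s t⟫ = 1 ∧ ⟪T s t, N s t⟫ = 0 ∧
      ⟪T s t, B s t⟫ = 0 ∧ ⟪N s t, B s t⟫ = 0)
    (hFS1 : ∀ s t, dS T s t = k s t • N s t)
    (hFS2 : ∀ s t, dS N s t = -(k s t) • T s t + τ s t • B s t)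
    (hFS3 : ∀ s t, dS B s t = -(τ s t) • N s t)
    (ν μ α : ℝ → ℝ → ℝ)
    (hνsm : ContDiff ℝ (⊤ : ℕ∞) (Function.uncurry ν))
    (hμsm : ContDiff ℝ (⊤ : ℕ∞) (Function.uncurry μ))
    (hαsm : ContDiff ℝ (⊤ : ℕ∞) (Function.uncurry α))
    (hkin : ∀ s t, dT γ s t = ν s t • T s t + μ s t • N s t + α s t • B s t)
    (hmixγ : ∀ s t, dS (dT γ) s t = dT (dS γ) s t)
    (hmixT : ∀ s t, dS (dT T) s t = dT (dS T) s t)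
    (hmixN : ∀ s t, dS (dT N) s t = dT (dS N) s t)
    (hmixB : ∀ s t, dS (dT B) s t = dT (dS B) s t)
    :
    ∀ s t, dT (fun s' t' => cvec (T s' t')) s t =
      -((1/2 : ℂ) • (ωf T N B τ s t • (fun i => starRingEnd ℂ (Mf N B τ s t i)) +
          (starRingEnd ℂ (ωf T N B τ s t)) • Mf N B τ s t)) +
        ((dS ν s t - μ s t * k s t : ℝ) : ℂ) • cvec (T s t) := by
  intro s t
  obtain ⟨hTT, hNN, hBB, hTN, hTB, hNB⟩ := horth s t
  set a : ℝ := ν s t * k s t + dS μ s t - α s t * τ s t with ha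
  set b : ℝ := μ s t * τ s t + dS α s t with hb
  set c : ℝ := dS ν s t - μ s t * k s t with hc
  -- Step 1 : dT T = c T + a N + b B
  have hds : HasDerivAt (fun x => ν x t • T x t + μ x t • N x t + α x t • B x t)
      ((dS ν s t • T s t + ν s t • dS T s t) + (dS μ s t • N s t + μ s t • dS N s t) +
        (dS α s t • B s t + α s t • dS B s t)) s := by
    have h1 : HasDerivAt (fun x => ν x t • T x t)
        (ν s t • dS T s t + dS ν s t • T s t) s :=
      (hasDerivAt_dS hνsm s t).smul (hasDerivAt_dS hTsm s t)
    have h2 : HasDerivAt (fun x => μ x t • N x t)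
        (μ s t • dS N s t + dS μ s t • N s t) s :=
      (hasDerivAt_dS hμsm s t).smul (hasDerivAt_dS hNsm s t)
    have h3 : HasDerivAt (fun x => α x t • B x t)
        (α s t • dS B s t + dS α s t • B s t) s :=
      (hasDerivAt_dS hαsm s t).smul (hasDerivAt_dS hBsm s t)
    have : HasDerivAt (fun x => ν x t • T x t + μ x t • N x t + α x t • B x t) _ s :=
      (h1.add h2).add h3
    convert this using 1
    module
  have hTt : dT T s t = c • T s t + a • N s t + b • B s t := by
    have hfg : dS γ = T := funext fun u => funext fun v => hTdef u v
    have h1 : dT T s t = dS (dT γ) s t := by rw [hmixγ, hfg]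
    have h2 : (fun x => dT γ x t) = fun x => ν x t • T x t + μ x t • N x t + α x t • B x t :=
      funext fun x => hkin x t
    have h3 : dS (dT γ) s t = (dS ν s t • T s t + ν s t • dS T s t) +
        (dS μ s t • N s t + μ s t • dS N s t) + (dS α s t • B s t + α s t • dS B s t) := by
      show deriv (fun x => dT γ x t) s = _
      rw [h2]
      exact hds.deriv
    rw [h1, h3, hFS1, hFS2, hFS3, ha, hb, hc]
    module
  -- Step 2 : time derivatives of orthogonality
  have hT't := hasDerivAt_dT hTsm s t
  have hN't := hasDerivAt_dT hNsm s t
  have hB't := hasDerivAt_dT hBsm s t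
  have hNTt : ⟪dT N s t, T s t⟫ = -a := by
    have h0 : HasDerivAt (fun x => ⟪N s x, T s x⟫)
        (⟪N s t, dT T s t⟫ + ⟪dT N s t, T s t⟫) t := hN't.inner ℝ hT't
    have h1 : (fun x : ℝ => ⟪N s x, T s x⟫) = fun _ => (0 : ℝ) := by
      funext x
      rw [real_inner_comm]
      exact (horth s x).2.2.2.1
    have h2 : ⟪N s t, dT T s t⟫ + ⟪dT N s t, T s t⟫ = 0 := by
      have := h0.deriv
      rw [h1] at this
      simpa using this.symm
    have h3 : ⟪N s t, dT T s t⟫ = a := by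
      rw [hTt, inner_add_right, inner_add_right, real_inner_smul_right,
        real_inner_smul_right, real_inner_smul_right,
        show ⟪N s t, T s t⟫ = (0:ℝ) from by rw [real_inner_comm]; exact hTN,
        hNN, hNB]
      ring
    linarith
  have hBTt : ⟪dT B s t, T s t⟫ = -b := by
    have h0 : HasDerivAt (fun x => ⟪B s x, T s x⟫)
        (⟪B s t, dT T s t⟫ + ⟪dT B s t, T s t⟫) t := hB't.inner ℝ hT't
    have h1 : (fun x : ℝ => ⟪B s x, T s x⟫) = fun _ => (0 : ℝ) := by
      funext x
      rw [real_inner_comm]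
      exact (horth s x).2.2.2.2.1
    have h2 : ⟪B s t, dT T s t⟫ + ⟪dT B s t, T s t⟫ = 0 := by
      have := h0.deriv
      rw [h1] at this
      simpa using this.symm
    have h3 : ⟪B s t, dT T s t⟫ = b := by
      rw [hTt, inner_add_right, inner_add_right, real_inner_smul_right,
        real_inner_smul_right, real_inner_smul_right,
        show ⟪B s t, T s t⟫ = (0:ℝ) from by rw [real_inner_comm]; exact hTB,
        show ⟪B s t, N s t⟫ = (0:ℝ) from by rw [real_inner_comm]; exact hNB,
        hBB]
      ring
    linarith
  -- Step 3 : time derivative of M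
  set θt : ℝ := deriv (fun x => θf τ s x) t with hθt
  have hθ : HasDerivAt (fun x => θf τ s x) θt t := (theta_diffAt hτsm s t).hasDerivAt
  set E : ℂ := Complex.exp (Complex.I * (θf τ s t : ℂ)) with hEdef
  have hexp : HasDerivAt (fun x => Complex.exp (Complex.I * (θf τ s x : ℂ)))
      (E * (Complex.I * (θt : ℂ))) t := (hθ.ofReal_comp.const_mul Complex.I).cexp
  have hNc : HasDerivAt (fun x => cvec (N s x)) (cvec (dT N s t)) t :=
    cvecL.hasFDerivAt.comp_hasDerivAt t hN't
  have hBc : HasDerivAt (fun x => cvec (B s x)) (cvec (dT B s t)) t :=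
    cvecL.hasFDerivAt.comp_hasDerivAt t hB't
  have hTc : HasDerivAt (fun x => cvec (T s x)) (cvec (dT T s t)) t :=
    cvecL.hasFDerivAt.comp_hasDerivAt t hT't
  have hV : HasDerivAt (fun x => cvec (N s x) + Complex.I • cvec (B s x))
      (cvec (dT N s t) + Complex.I • cvec (dT B s t)) t :=
    hNc.add (hBc.const_smul Complex.I)
  have hM : HasDerivAt (fun x => Mf N B τ s x)
      (E • (cvec (dT N s t) + Complex.I • cvec (dT B s t)) +
        (E * (Complex.I * (θt : ℂ))) • (cvec (N s t) + Complex.I • cvec (B s t))) t := by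
    have := hexp.smul hV
    exact this
  have hdTM : dT (Mf N B τ) s t =
      E • (cvec (dT N s t) + Complex.I • cvec (dT B s t)) +
        (E * (Complex.I * (θt : ℂ))) • (cvec (N s t) + Complex.I • cvec (B s t)) := hM.deriv
  -- Step 4 : value of ω
  have hω : ωf T N B τ s t = -(E * ((a : ℂ) + Complex.I * (b : ℂ))) := by
    show cip (dT (Mf N B τ) s t) (cvec (T s t)) = _
    rw [hdTM, cip_add_left, cip_smul_left, cip_smul_left, cip_add_left, cip_add_left,
      cip_smul_left, cip_smul_left, cip_cvec, cip_cvec, cip_cvec, cip_cvec,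
      hNTt, hBTt,
      show ⟪N s t, T s t⟫ = (0:ℝ) from by rw [real_inner_comm]; exact hTN,
      show ⟪B s t, T s t⟫ = (0:ℝ) from by rw [real_inner_comm]; exact hTB]
    push_cast
    ring
  -- conjugation facts
  have hEE : E * (starRingEnd ℂ) E = 1 := by
    rw [hEdef, ← Complex.exp_conj, ← Complex.exp_add]
    simp [Complex.conj_ofReal]
  -- Step 5 : assemble
  have hLHS : dT (fun s' t' => cvec (T s' t')) s t = cvec (dT T s t) := hTc.deriv
  rw [hLHS, hTt, hω]
  funext i
  simp only [Mf, ← hEdef, cvec, Pi.add_apply, Pi.smul_apply, Pi.neg_apply, smul_eq_mul,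
    PiLp.add_apply, PiLp.smul_apply, map_mul, map_add, map_neg, map_one, map_ofNat,
    Complex.conj_ofReal, Complex.conj_I, map_div₀]
  push_cast
  linear_combination (-(↑a * ↑(N s t i) + ↑b * ↑(B s t i))) * hEE +
    (↑b * ↑(B s t i) * (E * (starRingEnd ℂ) E)) * Complex.I_mul_I
end
end

section
/- There exists a real-valued function R(s,t) such that ∂M/∂t = iR M + ω T, where ω = ⟨∂M/∂t, T⟩ and T is regarded as a ℂ³-valued map; that is, the component of ∂M/∂t along M is purely imaginary and its component along M̄ vanishes. -/
open scoped BigOperators RealInnerProductSpace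
open Complex

noncomputable section

/-- Expansion of a real vector in an orthonormal set of three vectors in `ℝ³`. -/
lemma real_expand (Tv Nv Bv : E3)
    (h1 : ⟪Tv,Tv⟫=1) (h2 : ⟪Nv,Nv⟫=1) (h3 : ⟪Bv,Bv⟫=1)
    (h4 : ⟪Tv,Nv⟫=0) (h5 : ⟪Tv,Bv⟫=0) (h6 : ⟪Nv,Bv⟫=0)
    (x : E3) : x = ⟪x,Tv⟫ • Tv + ⟪x,Nv⟫ • Nv + ⟪x,Bv⟫ • Bv := by
  have h4' : ⟪Nv,Tv⟫ = 0 := by rw [real_inner_comm]; exact h4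
  have h5' : ⟪Bv,Tv⟫ = 0 := by rw [real_inner_comm]; exact h5
  have h6' : ⟪Bv,Nv⟫ = 0 := by rw [real_inner_comm]; exact h6
  set e : Fin 3 → E3 := ![Tv,Nv,Bv] with he
  have hon : Orthonormal ℝ e := by
    rw [orthonormal_iff_ite]
    intro i j
    fin_cases i <;> fin_cases j <;>
      simp only [he, Matrix.cons_val_zero, Matrix.cons_val_one, Matrix.head_cons,
        Matrix.cons_val_two, Matrix.tail_cons, Fin.mk_zero, Fin.mk_one] <;>
      first
        | simpa using h1 | simpa using h2 | simpa using h3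
        | simpa using h4 | simpa using h5 | simpa using h6
        | simpa using h4' | simpa using h5' | simpa using h6'
  have hcard : Fintype.card (Fin 3) = Module.finrank ℝ E3 := by
    simp [finrank_euclideanSpace]
  let b := basisOfOrthonormalOfCardEqFinrank hon hcard
  have hb : ⇑b = e := coe_basisOfOrthonormalOfCardEqFinrank hon hcard
  let ob : OrthonormalBasis (Fin 3) ℝ E3 := b.toOrthonormalBasis (by rw [hb]; exact hon)
  have hob : ⇑ob = e := by rw [Module.Basis.coe_toOrthonormalBasis, hb]
  have h := ob.sum_repr' x
  rw [hob, Fin.sum_univ_three] at h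
  simp only [he, Matrix.cons_val_zero, Matrix.cons_val_one, Matrix.head_cons,
    Matrix.cons_val_two, Matrix.tail_cons] at h
  rw [real_inner_comm Tv x, real_inner_comm Nv x, real_inner_comm Bv x]
  exact h.symm

/-- Expansion of a complex vector in the complexified orthonormal frame. -/
lemma complex_expand (Tv Nv Bv : E3)
    (h1 : ⟪Tv,Tv⟫=1) (h2 : ⟪Nv,Nv⟫=1) (h3 : ⟪Bv,Bv⟫=1)
    (h4 : ⟪Tv,Nv⟫=0) (h5 : ⟪Tv,Bv⟫=0) (h6 : ⟪Nv,Bv⟫=0)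
    (D : Fin 3 → ℂ) :
    D = cip D (cvec Tv) • cvec Tv + cip D (cvec Nv) • cvec Nv + cip D (cvec Bv) • cvec Bv := by
  have hre := real_expand Tv Nv Bv h1 h2 h3 h4 h5 h6 (WithLp.toLp 2 fun i => (D i).re)
  have him := real_expand Tv Nv Bv h1 h2 h3 h4 h5 h6 (WithLp.toLp 2 fun i => (D i).im)
  funext i
  have hrei := congrArg (· i) hre
  have himi := congrArg (· i) him
  simp only [PiLp.add_apply, PiLp.smul_apply, smul_eq_mul, PiLp.inner_apply, PiLp.toLp_apply,
    RCLike.inner_apply, conj_trivial, Fin.sum_univ_three] at hrei himi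
  apply Complex.ext
  · simp only [Pi.add_apply, Pi.smul_apply, smul_eq_mul, cvec, cip, Fin.sum_univ_three,
      Complex.add_re, Complex.mul_re, Complex.ofReal_re, Complex.ofReal_im, Complex.add_im,
      Complex.mul_im, mul_zero, sub_zero, zero_add, add_zero, zero_mul]
    linear_combination hrei
  · simp only [Pi.add_apply, Pi.smul_apply, smul_eq_mul, cvec, cip, Fin.sum_univ_three,
      Complex.add_re, Complex.mul_re, Complex.ofReal_re, Complex.ofReal_im, Complex.add_im,
      Complex.mul_im, mul_zero, sub_zero, zero_add, add_zero, zero_mul]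
    linear_combination himi

lemma exp_mul_conj (z : ℝ) :
    Complex.exp (I * (z:ℂ)) * (starRingEnd ℂ) (Complex.exp (I * (z:ℂ))) = 1 := by
  rw [← Complex.exp_conj]
  rw [← Complex.exp_add]
  simp [map_mul, Complex.conj_I, Complex.conj_ofReal]

lemma deriv_facts (N B : ℝ → ℝ → E3) (τ : ℝ → ℝ → ℝ) (s t : ℝ)
    (hN : ∀ x, ⟪N s x, N s x⟫ = 1) (hB : ∀ x, ⟪B s x, B s x⟫ = 1)
    (hNB : ∀ x, ⟪N s x, B s x⟫ = 0) :
    cip (dT (Mf N B τ) s t) (Mf N B τ s t) = 0 ∧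
      (cip (dT (Mf N B τ) s t) (fun i => (starRingEnd ℂ) (Mf N B τ s t i))).re = 0 := by
  by_cases hd : DifferentiableAt ℝ (fun x => Mf N B τ s x) t
  · set f : ℝ → (Fin 3 → ℂ) := fun x => Mf N B τ s x with hf
    set D : Fin 3 → ℂ := deriv f t with hDdef
    have hD : dT (Mf N B τ) s t = D := rfl
    have hfd : HasDerivAt f D t := hd.hasDerivAt
    have hfi : ∀ i, HasDerivAt (fun x => f x i) (D i) t := hasDerivAt_pi.mp hfd
    have hNr : ∀ x, N s x 0 * N s x 0 + N s x 1 * N s x 1 + N s x 2 * N s x 2 = 1 := by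
      intro x; have := hN x
      simp only [PiLp.inner_apply, RCLike.inner_apply, conj_trivial, Fin.sum_univ_three] at this
      linear_combination this
    have hBr : ∀ x, B s x 0 * B s x 0 + B s x 1 * B s x 1 + B s x 2 * B s x 2 = 1 := by
      intro x; have := hB x
      simp only [PiLp.inner_apply, RCLike.inner_apply, conj_trivial, Fin.sum_univ_three] at this
      linear_combination this
    have hNBr : ∀ x, N s x 0 * B s x 0 + N s x 1 * B s x 1 + N s x 2 * B s x 2 = 0 := by
      intro x; have := hNB x
      simp only [PiLp.inner_apply, RCLike.inner_apply, conj_trivial, Fin.sum_univ_three] at this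
      linear_combination this
    have hg1const : (fun x => ∑ i, f x i * f x i) = fun _ => (0:ℂ) := by
      funext x
      have hn : ((N s x 0 : ℂ) * N s x 0 + N s x 1 * N s x 1 + N s x 2 * N s x 2) = 1 := by
        have h := congrArg (Complex.ofReal) (hNr x); push_cast at h; exact h
      have hb : ((B s x 0 : ℂ) * B s x 0 + B s x 1 * B s x 1 + B s x 2 * B s x 2) = 1 := by
        have h := congrArg (Complex.ofReal) (hBr x); push_cast at h; exact h
      have hnb : ((N s x 0 : ℂ) * B s x 0 + N s x 1 * B s x 1 + N s x 2 * B s x 2) = 0 := by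
        have h := congrArg (Complex.ofReal) (hNBr x); push_cast at h; exact h
      simp only [hf, Mf, cvec, Pi.smul_apply, Pi.add_apply, smul_eq_mul, Fin.sum_univ_three]
      set e := Complex.exp (I * (θf τ s x : ℂ))
      linear_combination e^2 * hn + 2 * I * e^2 * hnb + I^2 * e^2 * hb + e^2 * Complex.I_sq
    have hg2const : (fun x => ∑ i, f x i * (starRingEnd ℂ) (f x i)) = fun _ => (2:ℂ) := by
      funext x
      have hn : ((N s x 0 : ℂ) * N s x 0 + N s x 1 * N s x 1 + N s x 2 * N s x 2) = 1 := by
        have h := congrArg (Complex.ofReal) (hNr x); push_cast at h; exact h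
      have hb : ((B s x 0 : ℂ) * B s x 0 + B s x 1 * B s x 1 + B s x 2 * B s x 2) = 1 := by
        have h := congrArg (Complex.ofReal) (hBr x); push_cast at h; exact h
      have he := exp_mul_conj (θf τ s x)
      simp only [hf, Mf, cvec, Pi.smul_apply, Pi.add_apply, smul_eq_mul, Fin.sum_univ_three,
        map_mul, map_add, Complex.conj_ofReal, Complex.conj_I]
      set e := Complex.exp (I * (θf τ s x : ℂ))
      set ce := (starRingEnd ℂ) e
      linear_combination e * ce * hn + e * ce * hb + 2 * he -
        (e * ce * ((B s x 0:ℂ) * B s x 0 + (B s x 1:ℂ) * B s x 1 + (B s x 2:ℂ) * B s x 2)) *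
          Complex.I_sq
    have hg1 : HasDerivAt (fun x => ∑ i, f x i * f x i)
        (∑ i, (D i * f t i + f t i * D i)) t :=
      HasDerivAt.fun_sum fun i _ => (hfi i).mul (hfi i)
    rw [hg1const] at hg1
    have h0 : (∑ i, (D i * f t i + f t i * D i)) = 0 := by
      simpa using ((hasDerivAt_const t (0:ℂ)).unique hg1).symm
    have hg2 : HasDerivAt (fun x => ∑ i, f x i * (starRingEnd ℂ) (f x i))
        (∑ i, (D i * (starRingEnd ℂ) (f t i) + f t i * (starRingEnd ℂ) (D i))) t :=
      HasDerivAt.fun_sum fun i _ => (hfi i).mul (hfi i).star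
    rw [hg2const] at hg2
    have h2 : (∑ i, (D i * (starRingEnd ℂ) (f t i) + f t i * (starRingEnd ℂ) (D i))) = 0 := by
      simpa using ((hasDerivAt_const t (2:ℂ)).unique hg2).symm
    constructor
    · rw [hD]
      simp only [cip, Fin.sum_univ_three] at h0 ⊢
      show D 0 * f t 0 + D 1 * f t 1 + D 2 * f t 2 = 0
      linear_combination h0 / 2
    · rw [hD]
      have hcre : cip D (fun i => (starRingEnd ℂ) (f t i)) +
          (starRingEnd ℂ) (cip D (fun i => (starRingEnd ℂ) (f t i))) = 0 := by
        simp only [cip, Fin.sum_univ_three, map_add, map_mul, RingHomCompTriple.comp_apply,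
          RingHom.id_apply, Complex.conj_conj] at h2 ⊢
        linear_combination h2
      have := congrArg Complex.re hcre
      simpa [Complex.add_re, Complex.conj_re] using this
  · have hD : dT (Mf N B τ) s t = 0 := by
      simp only [dT]
      exact deriv_zero_of_not_differentiableAt hd
    rw [hD]
    simp [cip]

theorem stmt5
    (γ T N B : ℝ → ℝ → E3) (k τ : ℝ → ℝ → ℝ)
    (hγsm : ContDiff ℝ (⊤ : ℕ∞) (Function.uncurry γ))
    (hTsm : ContDiff ℝ (⊤ : ℕ∞) (Function.uncurry T))
    (hNsm : ContDiff ℝ (⊤ : ℕ∞) (Function.uncurry N))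
    (hBsm : ContDiff ℝ (⊤ : ℕ∞) (Function.uncurry B))
    (hksm : ContDiff ℝ (⊤ : ℕ∞) (Function.uncurry k))
    (hτsm : ContDiff ℝ (⊤ : ℕ∞) (Function.uncurry τ))
    (hkpos : ∀ s t, 0 < k s t)
    (hTdef : ∀ s t, dS γ s t = T s t)
    (horth : ∀ s t, ⟪T s t, T s t⟫ = 1 ∧ ⟪N s t, N s t⟫ = 1 ∧
      ⟪B s t, B s t⟫ = 1 ∧ ⟪T s t, N s t⟫ = 0 ∧
      ⟪T s t, B s t⟫ = 0 ∧ ⟪N s t, B s t⟫ = 0)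
    (hFS1 : ∀ s t, dS T s t = k s t • N s t)
    (hFS2 : ∀ s t, dS N s t = -(k s t) • T s t + τ s t • B s t)
    (hFS3 : ∀ s t, dS B s t = -(τ s t) • N s t)
    :
    ∃ R : ℝ → ℝ → ℝ, ∀ s t, dT (Mf N B τ) s t =
      (Complex.I * (R s t : ℂ)) • Mf N B τ s t + ωf T N B τ s t • cvec (T s t) := by
  refine ⟨fun s t =>
    (cip (dT (Mf N B τ) s t) (fun i => (starRingEnd ℂ) (Mf N B τ s t i))).im / 2, ?_⟩
  intro s t
  simp only [ωf]
  obtain ⟨h1, h2, h3, h4, h5, h6⟩ := horth s t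
  obtain ⟨F1, F2⟩ := deriv_facts N B τ s t (fun x => (horth s x).2.1)
    (fun x => (horth s x).2.2.1) (fun x => (horth s x).2.2.2.2.2)
  set D := dT (Mf N B τ) s t with hDdef
  set e := Complex.exp (Complex.I * (θf τ s t : ℂ)) with hedef
  set aT := cip D (cvec (T s t)) with haT
  set aN := cip D (cvec (N s t)) with haN
  set aB := cip D (cvec (B s t)) with haB
  set c := cip D (fun i => (starRingEnd ℂ) (Mf N B τ s t i)) with hcdef
  set Rv : ℝ := c.im / 2 with hRv
  have hce : e * (starRingEnd ℂ) e = 1 := exp_mul_conj _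
  have hexp := complex_expand (T s t) (N s t) (B s t) h1 h2 h3 h4 h5 h6 D
  have hF1 : aN + Complex.I * aB = 0 := by
    have h : cip D (Mf N B τ s t) = e * (aN + Complex.I * aB) := by
      simp only [haN, haB, cip, Mf, cvec, Pi.smul_apply, Pi.add_apply, smul_eq_mul,
        Fin.sum_univ_three, ← hedef]
      ring
    rw [h] at F1
    rcases mul_eq_zero.mp F1 with h' | h'
    · exact absurd h' (Complex.exp_ne_zero _)
    · exact h'
  have hcval : c = (starRingEnd ℂ) e * (aN - Complex.I * aB) := by
    simp only [hcdef, haN, haB, cip, Mf, cvec, Pi.smul_apply, Pi.add_apply, smul_eq_mul,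
      Fin.sum_univ_three, map_mul, map_add, Complex.conj_ofReal, Complex.conj_I, ← hedef]
    ring
  have hcim : c = 2 * ((Rv : ℝ) : ℂ) * Complex.I := by
    apply Complex.ext
    · simp [F2, Complex.mul_re]
    · simp [Complex.mul_im, hRv]
      ring
  have haN' : aN = Complex.I * ((Rv : ℝ) : ℂ) * e := by
    linear_combination (-(e/2)) * hcval + (e/2) * hcim +
      (e * (starRingEnd ℂ) e / 2) * hF1 + (-aN) * hce
  have haB' : aB = -(((Rv : ℝ) : ℂ)) * e := by
    linear_combination (-Complex.I) * hF1 + Complex.I * haN' +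
      (aB + ((Rv : ℝ) : ℂ) * e) * Complex.I_sq
  funext i
  have hexpi := congrFun hexp i
  simp only [Pi.add_apply, Pi.smul_apply, smul_eq_mul, cvec, ← haT, ← haN, ← haB] at hexpi
  simp only [Mf, cvec, Pi.add_apply, Pi.smul_apply, smul_eq_mul, ← hedef]
  linear_combination hexpi + ((N s t i : ℝ) : ℂ) * haN' + ((B s t i : ℝ) : ℂ) * haB' +
    (-(((Rv : ℝ) : ℂ)) * e * ((B s t i : ℝ) : ℂ)) * Complex.I_sq
end
end
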